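/- arXiv:2011.07056 — 5 statements merged into one kernel-verified Lean document; each statement's English description precedes it below -/
import Mathlib

section
/- For all integers k ≥ 1 and N ≥ 1, one has (1/k)·G'_{1/[k]}(N) ≤ F'_k(N) ≤ k·G'_{1/[k]}(N). -/
/-- `Fk' k N` : the minimum cardinality of a finite set `B ⊆ ℤ` containing a `k`-term
arithmetic progression `{a + i·d : 1 ≤ i ≤ k}` for `N` distinct integer common differences `d`. -/
noncomputable def Fk' (k N : ℕ) : ℕ :=
  sInf { m | ∃ B : Finset ℤ, B.card = m ∧ ∃ D : Finset ℤ, D.card = N ∧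
    ∀ d ∈ D, ∃ a : ℤ, ∀ i ∈ Finset.Icc 1 k, a + (i : ℤ) * d ∈ B }

/-- `Ginvk k N` : the minimum cardinality of a finite set `A ⊆ ℚ` containing a
`1/[k]`-pattern `{x + r/i : 1 ≤ i ≤ k}` (with `r ≠ 0`) for `N` distinct integer basepoints `x`. -/
noncomputable def Ginvk (k N : ℕ) : ℕ :=
  sInf { m | ∃ A : Finset ℚ, A.card = m ∧ ∃ X : Finset ℤ, X.card = N ∧
    ∀ x ∈ X, ∃ r : ℚ, r ≠ 0 ∧ ∀ i ∈ Finset.Icc 1 k, (x : ℚ) + r / (i : ℚ) ∈ A }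

lemma fk_nonempty (k N : ℕ) :
    { m | ∃ B : Finset ℤ, B.card = m ∧ ∃ D : Finset ℤ, D.card = N ∧
      ∀ d ∈ D, ∃ a : ℤ, ∀ i ∈ Finset.Icc 1 k, a + (i : ℤ) * d ∈ B }.Nonempty := by
  refine ⟨_, (Finset.Icc 1 k ×ˢ Finset.Icc 1 N).image
      (fun p : ℕ × ℕ => (p.1 : ℤ) * (p.2 : ℤ)), rfl,
    (Finset.Icc 1 N).image (fun n : ℕ => (n : ℤ)), ?_, ?_⟩
  · rw [Finset.card_image_of_injective _ (fun a b h => by exact_mod_cast h), Nat.card_Icc]; omega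
  · intro d hd
    obtain ⟨n, hn, rfl⟩ := Finset.mem_image.mp hd
    refine ⟨0, fun i hi => ?_⟩
    simp only [zero_add]
    exact Finset.mem_image.mpr ⟨(i, n), Finset.mem_product.mpr ⟨hi, hn⟩, rfl⟩

lemma ginv_nonempty (k N : ℕ) :
    { m | ∃ A : Finset ℚ, A.card = m ∧ ∃ X : Finset ℤ, X.card = N ∧
      ∀ x ∈ X, ∃ r : ℚ, r ≠ 0 ∧ ∀ i ∈ Finset.Icc 1 k, (x : ℚ) + r / (i : ℚ) ∈ A }.Nonempty := by
  refine ⟨_, ((Finset.Icc 1 k) ×ˢ (Finset.Icc 1 N)).image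
      (fun p : ℕ × ℕ => (p.2 : ℚ) + 1 / (p.1 : ℚ)), rfl,
    (Finset.Icc 1 N).image (fun n : ℕ => (n : ℤ)), ?_, ?_⟩
  · rw [Finset.card_image_of_injective _ (fun a b h => by exact_mod_cast h), Nat.card_Icc]; omega
  · intro x hx
    obtain ⟨n, hn, rfl⟩ := Finset.mem_image.mp hx
    refine ⟨1, one_ne_zero, fun i hi => ?_⟩
    exact Finset.mem_image.mpr ⟨(i, n), Finset.mem_product.mpr ⟨hi, hn⟩, by push_cast; ring⟩

lemma ginv_le (k N : ℕ) : Ginvk k N ≤ k * Fk' k N := by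
  unfold Ginvk Fk'
  obtain ⟨B, hB, D, hD, hP⟩ := Nat.sInf_mem (fk_nonempty k N)
  choose! a ha using hP
  obtain ⟨s, hs⟩ := Infinite.exists_notMem_finset (D.image (fun d => -(a d)))
  set A : Finset ℚ := ((Finset.Icc 1 k) ×ˢ B).image
    (fun p : ℕ × ℤ => ((p.2 : ℚ) + (s : ℚ)) / (p.1 : ℚ)) with hAdef
  have hmem : A.card ∈ { m | ∃ A : Finset ℚ, A.card = m ∧ ∃ X : Finset ℤ, X.card = N ∧
      ∀ x ∈ X, ∃ r : ℚ, r ≠ 0 ∧ ∀ i ∈ Finset.Icc 1 k, (x : ℚ) + r / (i : ℚ) ∈ A } := by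
    refine ⟨A, rfl, D, hD, fun x hx => ?_⟩
    refine ⟨(a x : ℚ) + (s : ℚ), ?_, ?_⟩
    · intro h0
      have h1 : ((a x + s : ℤ) : ℚ) = 0 := by push_cast; linarith
      have h2 : a x + s = 0 := by exact_mod_cast h1
      exact hs (Finset.mem_image.mpr ⟨x, hx, by omega⟩)
    · intro i hi
      have hi1 : 1 ≤ i := (Finset.mem_Icc.mp hi).1
      have hine : (i : ℚ) ≠ 0 := Nat.cast_ne_zero.mpr (by omega)
      refine Finset.mem_image.mpr ⟨(i, a x + (i : ℤ) * x),
        Finset.mem_product.mpr ⟨hi, ha x hx i hi⟩, ?_⟩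
      push_cast
      field_simp
      ring
  calc sInf _ ≤ A.card := Nat.sInf_le hmem
    _ ≤ ((Finset.Icc 1 k) ×ˢ B).card := Finset.card_image_le
    _ = k * B.card := by rw [Finset.card_product, Nat.card_Icc, Nat.add_sub_cancel]
    _ = k * sInf _ := by rw [hB]

lemma fk_le (k N : ℕ) (hk : 1 ≤ k) : Fk' k N ≤ k * Ginvk k N := by
  unfold Ginvk Fk'
  obtain ⟨A, hA, X, hX, hP⟩ := Nat.sInf_mem (ginv_nonempty k N)
  choose! r hr0 hr using hP
  set M : ℕ := ∏ q ∈ A, q.den with hMdef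
  have hMne : M ≠ 0 := Finset.prod_ne_zero_iff.mpr fun q _ => q.den_nz
  have hM0 : (M : ℚ) ≠ 0 := Nat.cast_ne_zero.mpr hMne
  have hint : ∀ q ∈ A, ∃ z : ℤ, (M : ℚ) * q = (z : ℚ) := by
    intro q hq
    obtain ⟨t, ht⟩ := Finset.dvd_prod_of_mem (fun q : ℚ => q.den) hq
    refine ⟨(t : ℤ) * q.num, ?_⟩
    have hden : (q.den : ℚ) * q = (q.num : ℚ) := by
      have h := Rat.num_div_den q
      rw [div_eq_iff (by exact_mod_cast q.den_nz)] at h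
      rw [mul_comm]; exact h.symm
    calc (M : ℚ) * q = ((q.den * t : ℕ) : ℚ) * q := by rw [hMdef, ht]
      _ = (t : ℚ) * ((q.den : ℚ) * q) := by push_cast; ring
      _ = (((t : ℤ) * q.num : ℤ) : ℚ) := by rw [hden]; push_cast; ring
  set B : Finset ℤ := ((Finset.Icc 1 k) ×ˢ A).image
    (fun p : ℕ × ℚ => ⌊(p.1 : ℚ) * (M : ℚ) * p.2⌋) with hBdef
  have hmem : B.card ∈ { m | ∃ B : Finset ℤ, B.card = m ∧ ∃ D : Finset ℤ, D.card = N ∧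
      ∀ d ∈ D, ∃ a : ℤ, ∀ i ∈ Finset.Icc 1 k, a + (i : ℤ) * d ∈ B } := by
    refine ⟨B, rfl, X.image (fun x => (M : ℤ) * x), ?_, ?_⟩
    · rw [Finset.card_image_of_injective _
        (mul_right_injective₀ (by exact_mod_cast hMne)), hX]
    · intro d hd
      obtain ⟨x, hx, rfl⟩ := Finset.mem_image.mp hd
      have h1k : (1 : ℕ) ∈ Finset.Icc 1 k := Finset.mem_Icc.mpr ⟨le_refl 1, hk⟩
      obtain ⟨z₁, hz₁⟩ := hint _ (hr x hx 1 h1k)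
      rw [Nat.cast_one, div_one] at hz₁
      have hzr : (M : ℚ) * r x = ((z₁ - M * x : ℤ) : ℚ) := by
        push_cast
        linear_combination hz₁
      refine ⟨z₁ - M * x, fun i hi => ?_⟩
      have hi1 : 1 ≤ i := (Finset.mem_Icc.mp hi).1
      have hine : (i : ℚ) ≠ 0 := Nat.cast_ne_zero.mpr (by omega)
      refine Finset.mem_image.mpr ⟨(i, (x : ℚ) + r x / (i : ℚ)),
        Finset.mem_product.mpr ⟨hi, hr x hx i hi⟩, ?_⟩
      have key0 : (i : ℚ) * (M : ℚ) * ((x : ℚ) + r x / (i : ℚ))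
          = (i : ℚ) * ((M : ℚ) * (x : ℚ)) + (M : ℚ) * r x := by
        field_simp
      have key : (i : ℚ) * (M : ℚ) * ((x : ℚ) + r x / (i : ℚ))
          = (((z₁ - M * x) + (i : ℤ) * ((M : ℤ) * x) : ℤ) : ℚ) := by
        rw [key0, hzr]; push_cast; ring
      rw [key, Int.floor_intCast]
  calc sInf _ ≤ B.card := Nat.sInf_le hmem
    _ ≤ ((Finset.Icc 1 k) ×ˢ A).card := Finset.card_image_le
    _ = k * A.card := by rw [Finset.card_product, Nat.card_Icc, Nat.add_sub_cancel]
    _ = k * sInf _ := by rw [hA]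

/-- For all `k, N ≥ 1`, `(1/k)·G'_{1/[k]}(N) ≤ F'_k(N) ≤ k·G'_{1/[k]}(N)`. -/
theorem stmt0 (k N : ℕ) (hk : 1 ≤ k) (hN : 1 ≤ N) :
    (Ginvk k N : ℝ) / k ≤ Fk' k N ∧ (Fk' k N : ℝ) ≤ k * Ginvk k N := by
  have h1 := ginv_le k N
  have h2 := fk_le k N hk
  have hk0 : (0 : ℝ) < (k : ℝ) := by exact_mod_cast hk
  constructor
  · rw [div_le_iff₀ hk0]
    calc (Ginvk k N : ℝ) ≤ ((k * Fk' k N : ℕ) : ℝ) := by exact_mod_cast h1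
      _ = (Fk' k N : ℝ) * (k : ℝ) := by push_cast; ring
  · calc (Fk' k N : ℝ) ≤ ((k * Ginvk k N : ℕ) : ℝ) := by exact_mod_cast h2
      _ = (k : ℝ) * (Ginvk k N : ℝ) := by push_cast; ring
end

section
/- For all integers k ≥ 2 and n ≥ 1 there exist finite sets B, S ⊆ ℤ with |B| = k^n and |S| = n·k^{n-1} such that for every x ∈ S there is a nonzero integer r with {x + i·r : 1 ≤ i ≤ k} ⊆ B. In particular, a set of integers of cardinality k^n can contain a k-term arithmetic progression with basepoint x for n·k^{n-1} distinct integer basepoints x. -/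
/-- Base-`b` evaluation of a digit vector. -/
def phiDig (b : ℕ) {N : ℕ} (c : Fin N → ℕ) : ℕ := ∑ i, c i * b ^ (i : ℕ)

lemma phiDig_inj (b : ℕ) (hb : 0 < b) :
    ∀ {N : ℕ} (c c' : Fin N → ℕ), (∀ i, c i < b) → (∀ i, c' i < b) →
      phiDig b c = phiDig b c' → c = c' := by
  intro N
  induction N with
  | zero => intro c c' _ _ _; funext i; exact i.elim0
  | succ N ih =>
    intro c c' hc hc' h
    unfold phiDig at h
    rw [Fin.sum_univ_succ, Fin.sum_univ_succ] at h
    simp only [Fin.val_zero, pow_zero, mul_one, Fin.val_succ, pow_succ] at h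
    have hrw : ∀ d : Fin (N+1) → ℕ,
        (∑ i : Fin N, d i.succ * (b ^ (i:ℕ) * b)) = b * ∑ i : Fin N, d i.succ * b ^ (i:ℕ) := by
      intro d
      rw [Finset.mul_sum]
      exact Finset.sum_congr rfl fun i _ => by ring
    rw [hrw c, hrw c'] at h
    have h0 : c 0 = c' 0 := by
      have := congrArg (· % b) h
      simpa [Nat.add_mul_mod_self_left, Nat.mod_eq_of_lt (hc 0),
        Nat.mod_eq_of_lt (hc' 0)] using this
    have htail : (fun i : Fin N => c i.succ) = fun i => c' i.succ := by
      apply ih _ _ (fun i => hc i.succ) (fun i => hc' i.succ)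
      have : b * ∑ i : Fin N, c i.succ * b ^ (i:ℕ) = b * ∑ i : Fin N, c' i.succ * b ^ (i:ℕ) := by
        omega
      exact Nat.eq_of_mul_eq_mul_left hb this
    funext i
    cases i using Fin.cases with
    | zero => exact h0
    | succ i => exact congrFun htail i

lemma phiDig_insertNth (b : ℕ) {N : ℕ} (j : Fin (N+1)) (x : ℕ) (w : Fin N → ℕ) :
    phiDig b (Fin.insertNth j x w) = x * b ^ (j : ℕ) + phiDig b (Fin.insertNth j 0 w) := by
  unfold phiDig
  rw [← Finset.add_sum_erase _ _ (Finset.mem_univ j),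
    ← Finset.add_sum_erase _ _ (Finset.mem_univ j)]
  simp only [Fin.insertNth_apply_same, zero_mul, zero_add]
  congr 1
  refine Finset.sum_congr rfl fun l hl => ?_
  obtain ⟨i, rfl⟩ := Fin.exists_succAbove_eq (Finset.ne_of_mem_erase hl)
  rw [Fin.insertNth_apply_succAbove, Fin.insertNth_apply_succAbove]

/-- For all `k ≥ 2` and `n ≥ 1` there exist finite sets `B, S ⊆ ℤ` with `|B| = k^n` and
`|S| = n·k^(n-1)` such that for every `x ∈ S` there is a nonzero integer `r` with
`{x + i·r : 1 ≤ i ≤ k} ⊆ B`. -/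
theorem stmt2 (k n : ℕ) (hk : 2 ≤ k) (hn : 1 ≤ n) :
    ∃ B S : Finset ℤ, B.card = k ^ n ∧ S.card = n * k ^ (n - 1) ∧
      ∀ x ∈ S, ∃ r : ℤ, r ≠ 0 ∧ ∀ i ∈ Finset.Icc 1 k, x + (i : ℤ) * r ∈ B := by
  obtain ⟨m, rfl⟩ : ∃ m, n = m + 1 := ⟨n - 1, by omega⟩
  set b := k + 1 with hb
  -- B : all base-b numbers with m+1 digits each in [1,k]
  have hblt : ∀ (w : Fin m → ℕ), (∀ i, w i ∈ Finset.Icc 1 k) → ∀ (j : Fin (m+1)) (v : ℕ),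
      v < b → ∀ i, (Fin.insertNth j v w : Fin (m+1) → ℕ) i < b := by
    intro w hw j v hv i
    rcases eq_or_ne i j with rfl | hne
    · simpa using hv
    · obtain ⟨l, rfl⟩ := Fin.exists_succAbove_eq hne
      rw [Fin.insertNth_apply_succAbove]
      have := hw l
      simp only [Finset.mem_Icc] at this
      omega
  refine ⟨Finset.image (fun c => (phiDig b c : ℤ))
      (Fintype.piFinset fun _ : Fin (m+1) => Finset.Icc 1 k),
    Finset.image (fun p : Fin (m+1) × (Fin m → ℕ) => (phiDig b (Fin.insertNth p.1 0 p.2) : ℤ))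
      (Finset.univ ×ˢ Fintype.piFinset fun _ : Fin m => Finset.Icc 1 k), ?_, ?_, ?_⟩
  · rw [Finset.card_image_of_injOn, Fintype.card_piFinset]
    · simp [Nat.card_Icc]
    · intro c hc c' hc' h
      simp only at h
      simp only [Finset.mem_coe, Fintype.mem_piFinset, Finset.mem_Icc] at hc hc'
      exact phiDig_inj b (by omega) c c' (fun i => by have := hc i; omega)
        (fun i => by have := hc' i; omega) (by exact_mod_cast h)
  · rw [Finset.card_image_of_injOn]
    · simp [Finset.card_univ, mul_comm]
    · rintro ⟨j, w⟩ hp ⟨j', w'⟩ hq h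
      simp only [Finset.mem_coe, Finset.mem_product, Fintype.mem_piFinset, Finset.mem_univ,
        true_and] at hp hq
      have heq : (Fin.insertNth j 0 w : Fin (m+1) → ℕ) = Fin.insertNth j' 0 w' := by
        refine phiDig_inj b (by omega) (Fin.insertNth j 0 w : Fin (m+1) → ℕ)
          (Fin.insertNth j' 0 w' : Fin (m+1) → ℕ) (hblt w hp j 0 (by omega))
          (hblt w' hq j' 0 (by omega)) ?_
        simp only at h
        exact_mod_cast h
      have hjj : j = j' := by
        by_contra hne
        obtain ⟨l, hl⟩ := Fin.exists_succAbove_eq (Ne.symm hne)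
        have h1 : (Fin.insertNth j 0 w : Fin (m+1) → ℕ) j' = w l := by rw [← hl, Fin.insertNth_apply_succAbove]
        have h2 : (Fin.insertNth j' 0 w' : Fin (m+1) → ℕ) j' = 0 := by simp
        have := hp l
        simp only [Finset.mem_Icc] at this
        rw [heq, h2] at h1
        omega
      subst hjj
      have hww : w = w' := by
        funext i
        have := congrFun heq (j.succAbove i)
        rwa [Fin.insertNth_apply_succAbove, Fin.insertNth_apply_succAbove] at this
      simp [hww]
  · rintro x hx
    simp only [Finset.mem_image, Finset.mem_product, Finset.mem_univ, true_and,
      Prod.exists] at hx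
    obtain ⟨j, w, hw, rfl⟩ := hx
    simp only [Fintype.mem_piFinset] at hw
    refine ⟨(b : ℤ) ^ (j : ℕ), by positivity, fun i hi => ?_⟩
    simp only [Finset.mem_Icc] at hi
    have key : (phiDig b (Fin.insertNth j 0 w) : ℤ) + (i : ℤ) * (b : ℤ) ^ (j : ℕ)
        = (phiDig b (Fin.insertNth j i w) : ℤ) := by
      conv_rhs => rw [phiDig_insertNth]
      push_cast
      ring
    rw [key]
    refine Finset.mem_image.2 ⟨Fin.insertNth j i w, ?_, rfl⟩
    rw [Fintype.mem_piFinset]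
    intro l
    rcases eq_or_ne l j with rfl | hne
    · simp only [Fin.insertNth_apply_same, Finset.mem_Icc]
      omega
    · obtain ⟨l', rfl⟩ := Fin.exists_succAbove_eq hne
      rw [Fin.insertNth_apply_succAbove]
      exact hw l'
end

section
/- Let n, m ≥ 1, let X be a set, let R ⊆ ℝ^m be a bounded set, and for each (x, r) ∈ X × R let P_{x,r} ⊆ ℝ^n be a finite set. For B ⊆ ℝ^n define S(B) = {r ∈ R : there exists x ∈ X with P_{x,r} ⊆ B}. Suppose c > 0 is a constant such that dim_M B ≥ c·dim_M S(B) for every bounded set B ⊆ ℝ^n. Then dim_P B' ≥ c·dim_P S(B') for every set B' ⊆ ℝ^n. -/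
/-!
If `f j` is a cover of `B'` by bounded sets, the partial unions `B k = f 0 ∪ ⋯ ∪ f k` are bounded
and, `dim_M` being finitely stable, satisfy `dim_M (B k) ≤ ⨆ j, dim_M (f j)`. Since every `P x r` is
finite, `P x r ⊆ B'` forces `P x r ⊆ B k` for some `k`, so the bounded sets `S (B k)` cover
`S B'` and `c · dim_P (S B') ≤ ⨆ k, c · dim_M (S (B k)) ≤ ⨆ k, dim_M (B k) ≤ ⨆ j, dim_M (f j)`.
Bounded subsets of `ℝⁿ` have `dim_M ≤ n` (grid covers), which keeps these real suprema genuine.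
-/

open Set Filter Bornology

/-- Covering number of `E` by open balls of radius `ε`. -/
noncomputable def covNum {X : Type*} [PseudoMetricSpace X] (E : Set X) (ε : ℝ) : ℕ∞ :=
  ⨅ (t : Finset X) (_ : E ⊆ ⋃ x ∈ t, Metric.ball x ε), (t.card : ℕ∞)

/-- Upper Minkowski (box-counting) dimension. -/
noncomputable def dimM {X : Type*} [PseudoMetricSpace X] (E : Set X) : ℝ :=
  limsup (fun ε : ℝ => Real.log ((covNum E ε).toNat) / Real.log (1 / ε))
    (nhdsWithin 0 (Ioi 0))

/-- Packing dimension, as modified upper box dimension: the infimum of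
`⨆ j, dimM (E j)` over countable covers of the set by bounded sets. -/
noncomputable def dimP {X : Type*} [PseudoMetricSpace X] (E : Set X) : ℝ :=
  sInf { a : ℝ | ∃ f : ℕ → Set X, (E ⊆ ⋃ j, f j) ∧ (∀ j, IsBounded (f j)) ∧
    a = ⨆ j, dimM (f j) }

open Topology

lemma Filter.limsup_le_of_eventually_le_add_of_tendsto_zero {α : Type*} {l : Filter α}
    [l.NeBot] {f g : α → ℝ} {a : ℝ} (hf : IsCoboundedUnder (· ≤ ·) l f)
    (hg : Tendsto g l (𝓝 0)) (hfg : ∀ᶠ x in l, f x ≤ a + g x) : limsup f l ≤ a := by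
  have hlim : Tendsto (fun x => a + g x) l (𝓝 a) := by simpa using hg.const_add a
  exact (limsup_le_limsup hfg hf hlim.isBoundedUnder_le).trans_eq hlim.limsup_eq

lemma Real.log_natCast_le_log_two_add_max {a b u : ℕ} (h : u ≤ a + b) :
    Real.log u ≤ Real.log 2 + max (Real.log a) (Real.log b) := by
  wlog hab : a ≤ b generalizing a b
  · simpa only [max_comm] using this (b := a) (a := b) (by omega) (by omega)
  rcases Nat.eq_zero_or_pos u with rfl | hu
  · simp only [Nat.cast_zero, Real.log_zero]
    have := Real.log_natCast_nonneg b
    positivity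
  calc Real.log u ≤ Real.log (2 * b) := Real.log_le_log (by positivity) (mod_cast by omega)
    _ = Real.log 2 + Real.log b := Real.log_mul two_ne_zero (by norm_cast; omega)
    _ ≤ Real.log 2 + max (Real.log a) (Real.log b) := by gcongr; exact le_max_right _ _

lemma tendsto_div_log_one_div (C : ℝ) :
    Tendsto (fun ε => C / Real.log (1 / ε)) (𝓝[>] 0) (𝓝 0) := by
  refine tendsto_const_nhds.div_atTop ?_
  simp only [one_div]
  exact Real.tendsto_log_atTop.comp tendsto_inv_nhdsGT_zero

section PseudoMetric

variable {Y : Type*} [PseudoMetricSpace Y]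

noncomputable def boxRatio (E : Set Y) (ε : ℝ) : ℝ :=
  Real.log (covNum E ε).toNat / Real.log (1 / ε)

lemma covNum_le_card {E : Set Y} {ε : ℝ} {t : Finset Y}
    (h : E ⊆ ⋃ x ∈ t, Metric.ball x ε) : covNum E ε ≤ t.card :=
  iInf₂_le t h

lemma covNum_mono {E F : Set Y} (h : E ⊆ F) (ε : ℝ) : covNum E ε ≤ covNum F ε :=
  le_iInf₂ fun _ ht => covNum_le_card (h.trans ht)

lemma exists_card_le_covNum {E : Set Y} {ε : ℝ} (h : covNum E ε ≠ ⊤) :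
    ∃ t : Finset Y, E ⊆ ⋃ x ∈ t, Metric.ball x ε ∧ (t.card : ℕ∞) ≤ covNum E ε := by
  have hlt : covNum E ε < covNum E ε + 1 := ENat.lt_add_one_iff h |>.mpr le_rfl
  simp only [covNum, iInf_lt_iff] at hlt
  obtain ⟨t, hcov, hcard⟩ := hlt
  exact ⟨t, hcov, ENat.lt_add_one_iff h |>.mp hcard⟩

lemma covNum_union_le (A B : Set Y) (ε : ℝ) :
    covNum (A ∪ B) ε ≤ covNum A ε + covNum B ε := by
  classical
  rcases eq_or_ne (covNum A ε) ⊤ with hA | hA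
  · simp [hA]
  rcases eq_or_ne (covNum B ε) ⊤ with hB | hB
  · simp [hB]
  obtain ⟨tA, hcovA, hcardA⟩ := exists_card_le_covNum hA
  obtain ⟨tB, hcovB, hcardB⟩ := exists_card_le_covNum hB
  have hcov : A ∪ B ⊆ ⋃ x ∈ tA ∪ tB, Metric.ball x ε := by
    simp only [Finset.set_biUnion_union]
    exact union_subset_union hcovA hcovB
  calc covNum (A ∪ B) ε ≤ (tA ∪ tB).card := covNum_le_card hcov
    _ ≤ tA.card + tB.card := mod_cast Finset.card_union_le _ _
    _ ≤ covNum A ε + covNum B ε := add_le_add hcardA hcardB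

lemma toNat_covNum_union_le (A B : Set Y) (ε : ℝ) :
    (covNum (A ∪ B) ε).toNat ≤ (covNum A ε).toNat + (covNum B ε).toNat := by
  rcases eq_or_ne (covNum (A ∪ B) ε) ⊤ with h | h
  · simp [h]
  have hA := ne_top_of_le_ne_top h (covNum_mono subset_union_left ε)
  have hB := ne_top_of_le_ne_top h (covNum_mono subset_union_right ε)
  rw [← ENat.toNat_add hA hB]
  exact ENat.toNat_le_toNat (covNum_union_le A B ε) (by simp [hA, hB])

lemma boxRatio_nonneg (E : Set Y) {ε : ℝ} (hε : ε ∈ Ioo 0 1) : 0 ≤ boxRatio E ε :=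
  div_nonneg (Real.log_natCast_nonneg _) (Real.log_nonneg (one_le_one_div hε.1 hε.2.le))

lemma eventually_mem_Ioo_zero_one : ∀ᶠ ε in 𝓝[>] (0 : ℝ), ε ∈ Ioo 0 1 :=
  Ioo_mem_nhdsGT one_pos

lemma isCoboundedUnder_boxRatio (E : Set Y) :
    IsCoboundedUnder (· ≤ ·) (𝓝[>] (0 : ℝ)) (boxRatio E) :=
  isCoboundedUnder_le_of_eventually_le _ (eventually_mem_Ioo_zero_one.mono fun _ hε =>
    boxRatio_nonneg E hε)

lemma dimM_nonneg (E : Set Y) : 0 ≤ dimM E := by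
  refine Real.sInf_nonneg fun a ha => ?_
  obtain ⟨ε, hε, hle⟩ := ((eventually_mem_Ioo_zero_one.and ha).exists)
  exact (boxRatio_nonneg E hε).trans hle

lemma boxRatio_union_le (A B : Set Y) {ε : ℝ} (hε : ε ∈ Ioo 0 1) :
    boxRatio (A ∪ B) ε ≤ max (boxRatio A ε) (boxRatio B ε) + Real.log 2 / Real.log (1 / ε) := by
  have hL : 0 < Real.log (1 / ε) := Real.log_pos (one_lt_one_div hε.1 hε.2)
  rw [boxRatio, boxRatio, boxRatio, max_div_div_right hL.le, ← add_div, add_comm]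
  gcongr
  exact Real.log_natCast_le_log_two_add_max (toNat_covNum_union_le A B ε)

lemma dimM_union_le {A B : Set Y} (hA : IsBoundedUnder (· ≤ ·) (𝓝[>] 0) (boxRatio A))
    (hB : IsBoundedUnder (· ≤ ·) (𝓝[>] 0) (boxRatio B)) :
    dimM (A ∪ B) ≤ max (dimM A) (dimM B) := by
  refine le_of_forall_gt_imp_ge_of_dense fun a ha => ?_
  refine limsup_le_of_eventually_le_add_of_tendsto_zero (isCoboundedUnder_boxRatio _)
    (tendsto_div_log_one_div (Real.log 2)) ?_
  filter_upwards [eventually_mem_Ioo_zero_one,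
    eventually_lt_of_limsup_lt ((le_max_left _ _).trans_lt ha) hA,
    eventually_lt_of_limsup_lt ((le_max_right _ _).trans_lt ha) hB] with ε hε hAε hBε
  exact (boxRatio_union_le A B hε).trans (by gcongr; exact max_le hAε.le hBε.le)

end PseudoMetric

lemma Bornology.isBounded_accumulate {α : Type*} [Bornology α] {f : ℕ → Set α}
    (hf : ∀ j, IsBounded (f j)) (k : ℕ) : IsBounded (accumulate f k) := by
  induction k with
  | zero => simpa [accumulate_zero_nat] using hf 0
  | succ k ih => simpa [accumulate_succ] using ⟨ih, hf _⟩

lemma Set.Finite.exists_subset_accumulate {α : Type*} {s : Set α} (hs : s.Finite)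
    {f : ℕ → Set α} (h : s ⊆ ⋃ j, f j) : ∃ k, s ⊆ accumulate f k := by
  rw [← iUnion_accumulate, ← hs.coe_toFinset] at h
  simpa using monotone_accumulate.directed_le.exists_mem_subset_of_finset_subset_biUnion h

section Euclidean

variable {n : ℕ}

lemma floor_div_mem_Icc_ceil {x K δ : ℝ} (hx : |x| ≤ K) (hδ : 0 < δ) :
    ⌊x / δ⌋ ∈ Finset.Icc (-(⌈K / δ⌉₊ : ℤ)) ⌈K / δ⌉₊ := by
  have hxK : |x / δ| ≤ K / δ := by rw [abs_div, abs_of_pos hδ]; gcongr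
  have hK : K / δ ≤ ⌈K / δ⌉₊ := Nat.le_ceil _
  rw [Finset.mem_Icc, Int.le_floor, ← Int.cast_le (R := ℝ)]
  push_cast
  constructor
  · linarith [neg_abs_le (x / δ)]
  · linarith [Int.floor_le (x / δ), le_abs_self (x / δ)]

lemma covNum_le_of_subset_closedBall {E : Set (EuclideanSpace ℝ (Fin n))} {K δ : ℝ}
    (hE : E ⊆ Metric.closedBall 0 K) (hδ : 0 < δ) :
    covNum E ((n + 1) * δ) ≤ ((2 * ⌈K / δ⌉₊ + 1) ^ n : ℕ) := by
  classical
  set M := ⌈K / δ⌉₊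
  let grid : (Fin n → ℤ) → EuclideanSpace ℝ (Fin n) := fun z => WithLp.toLp 2 fun i => δ * z i
  let I := Fintype.piFinset fun _ : Fin n => Finset.Icc (-(M : ℤ)) M
  have hI : I.card = (2 * M + 1) ^ n := by
    rw [Fintype.card_piFinset_const, Int.card_Icc]
    congr 1
    omega
  have hcover : E ⊆ ⋃ x ∈ I.image grid, Metric.ball x ((n + 1) * δ) := by
    intro e he
    have heK : ∀ i, |e i| ≤ K := fun i =>
      (PiLp.norm_apply_le e i).trans (by simpa using hE he)
    let z : Fin n → ℤ := fun i => ⌊e i / δ⌋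
    have hz : z ∈ I := Fintype.mem_piFinset.2 fun i => floor_div_mem_Icc_ceil (heK i) hδ
    have hcoord : ∀ i, dist (e i) (grid z i) ^ 2 ≤ δ ^ 2 := fun i => by
      have h0 := Int.sub_floor_div_mul_nonneg (e i) hδ
      have h1 := Int.sub_floor_div_mul_lt (e i) hδ
      rw [Real.dist_eq, sq_abs]
      simp only [grid, z]
      nlinarith
    have hdist : dist e (grid z) < (n + 1) * δ := by
      rw [EuclideanSpace.dist_eq, Real.sqrt_lt' (by positivity)]
      calc ∑ i, dist (e i) (grid z i) ^ 2 ≤ ∑ _i : Fin n, δ ^ 2 :=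
            Finset.sum_le_sum fun i _ => hcoord i
        _ = n * δ ^ 2 := by simp
        _ < ((n + 1) * δ) ^ 2 := by nlinarith [sq_pos_of_pos hδ]
    exact mem_iUnion₂.2 ⟨grid z, Finset.mem_image_of_mem _ hz, hdist⟩
  calc covNum E ((n + 1) * δ) ≤ (I.image grid).card := covNum_le_card hcover
    _ ≤ ((2 * M + 1) ^ n : ℕ) := mod_cast hI ▸ Finset.card_image_le

lemma log_toNat_covNum_le {E : Set (EuclideanSpace ℝ (Fin n))} {K ε : ℝ} (hK : 0 ≤ K)
    (hE : E ⊆ Metric.closedBall 0 K) (hε : ε ∈ Ioo 0 1) :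
    Real.log (covNum E ε).toNat ≤ n * (Real.log (2 * K * (n + 1) + 3) + Real.log (1 / ε)) := by
  obtain ⟨hε0, hε1⟩ := hε
  set D := 2 * K * (n + 1) + 3
  have hD : 1 ≤ D := by
    have : 0 ≤ 2 * K * (n + 1) := by positivity
    linarith
  set M := ⌈K / (ε / (n + 1))⌉₊
  have hN : (covNum E ε).toNat ≤ (2 * M + 1) ^ n := by
    have h := covNum_le_of_subset_closedBall hE (div_pos hε0 (by positivity : (0 : ℝ) < n + 1))
    rw [mul_div_cancel₀ _ (by positivity)] at h
    exact ENat.toNat_le_toNat h (ENat.natCast_ne_top _)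
  have hM : ((2 * M + 1 : ℕ) : ℝ) ≤ D / ε := by
    have h1 : (M : ℝ) < K / (ε / (n + 1)) + 1 := Nat.ceil_lt_add_one (by positivity)
    have h2 : 2 * (K / (ε / (n + 1))) + 3 ≤ D / ε := by
      rw [div_div_eq_mul_div, le_div_iff₀ hε0]
      field_simp
      nlinarith
    push_cast
    linarith
  rcases Nat.eq_zero_or_pos (covNum E ε).toNat with h0 | hpos
  · rw [h0, Nat.cast_zero, Real.log_zero]
    have := Real.log_nonneg hD
    have := Real.log_nonneg (one_le_one_div hε0 hε1.le)
    positivity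
  calc Real.log (covNum E ε).toNat ≤ Real.log (((2 * M + 1) ^ n : ℕ) : ℝ) :=
        Real.log_le_log (mod_cast hpos) (mod_cast hN)
    _ = n * Real.log ((2 * M + 1 : ℕ) : ℝ) := by rw [Nat.cast_pow, Real.log_pow]
    _ ≤ n * Real.log (D / ε) := by gcongr
    _ = n * (Real.log D + Real.log (1 / ε)) := by
        rw [div_eq_mul_one_div, Real.log_mul (by positivity) (by positivity)]

lemma eventually_boxRatio_le {E : Set (EuclideanSpace ℝ (Fin n))} (hE : IsBounded E) :
    ∃ C, ∀ᶠ ε in 𝓝[>] 0, boxRatio E ε ≤ n + C / Real.log (1 / ε) := by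
  obtain ⟨K, hK, hEK⟩ := hE.subset_closedBall_lt 0 0
  refine ⟨n * Real.log (2 * K * (n + 1) + 3), ?_⟩
  filter_upwards [eventually_mem_Ioo_zero_one] with ε hε
  have hL : 0 < Real.log (1 / ε) := Real.log_pos (one_lt_one_div hε.1 hε.2)
  rw [boxRatio, div_le_iff₀ hL, add_mul, div_mul_cancel₀ _ hL.ne']
  linarith [log_toNat_covNum_le hK.le hEK hε]

lemma isBoundedUnder_boxRatio {E : Set (EuclideanSpace ℝ (Fin n))} (hE : IsBounded E) :
    IsBoundedUnder (· ≤ ·) (𝓝[>] 0) (boxRatio E) := by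
  obtain ⟨C, hC⟩ := eventually_boxRatio_le hE
  exact ((tendsto_div_log_one_div C).const_add (n : ℝ)).isBoundedUnder_le.mono_le hC

lemma dimM_le_of_isBounded {E : Set (EuclideanSpace ℝ (Fin n))} (hE : IsBounded E) :
    dimM E ≤ n := by
  obtain ⟨C, hC⟩ := eventually_boxRatio_le hE
  exact limsup_le_of_eventually_le_add_of_tendsto_zero (isCoboundedUnder_boxRatio E)
    (tendsto_div_log_one_div C) hC

lemma dimM_accumulate_le {f : ℕ → Set (EuclideanSpace ℝ (Fin n))} (hf : ∀ j, IsBounded (f j))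
    {a : ℝ} (ha : ∀ j, dimM (f j) ≤ a) (k : ℕ) : dimM (accumulate f k) ≤ a := by
  induction k with
  | zero => simpa [accumulate_zero_nat] using ha 0
  | succ k ih =>
    rw [accumulate_succ]
    exact (dimM_union_le (isBoundedUnder_boxRatio (isBounded_accumulate hf k))
      (isBoundedUnder_boxRatio (hf _))).trans (max_le ih (ha _))

end Euclidean

section PackingDimension

variable {Y : Type*} [PseudoMetricSpace Y]

lemma dimP_le_iSup_dimM {E : Set Y} {f : ℕ → Set Y} (hE : E ⊆ ⋃ j, f j)
    (hf : ∀ j, IsBounded (f j)) : dimP E ≤ ⨆ j, dimM (f j) :=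
  csInf_le ⟨0, by rintro _ ⟨g, -, -, rfl⟩; exact Real.iSup_nonneg fun j => dimM_nonneg (g j)⟩
    ⟨f, hE, hf, rfl⟩

lemma le_dimP {E : Set Y} {a : ℝ}
    (h : ∀ f : ℕ → Set Y, E ⊆ ⋃ j, f j → (∀ j, IsBounded (f j)) → a ≤ ⨆ j, dimM (f j)) :
    a ≤ dimP E := by
  refine le_csInf ?_ fun _ ⟨f, hE, hf, ha⟩ => ha ▸ h f hE hf
  rcases E.eq_empty_or_nonempty with rfl | ⟨y, -⟩
  · exact ⟨_, fun _ => ∅, empty_subset _, fun _ => isBounded_empty, rfl⟩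
  · exact ⟨_, fun j => Metric.ball y j, by simp [Metric.iUnion_ball_nat],
      fun _ => Metric.isBounded_ball, rfl⟩

end PackingDimension

theorem stmt5_general (n m : ℕ) (X : Type*)
    (R : Set (EuclideanSpace ℝ (Fin m))) (hR : IsBounded R)
    (P : X → EuclideanSpace ℝ (Fin m) → Set (EuclideanSpace ℝ (Fin n)))
    (hP : ∀ x : X, ∀ r ∈ R, (P x r).Finite)
    (c : ℝ) (hc : 0 < c)
    (hyp : ∀ B : Set (EuclideanSpace ℝ (Fin n)), IsBounded B →
      c * dimM {r | r ∈ R ∧ ∃ x : X, P x r ⊆ B} ≤ dimM B) :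
    ∀ B' : Set (EuclideanSpace ℝ (Fin n)),
      c * dimP {r | r ∈ R ∧ ∃ x : X, P x r ⊆ B'} ≤ dimP B' := by
  intro B'
  refine le_dimP fun f hcov hf => ?_
  have hbdd : BddAbove (range fun j => dimM (f j)) :=
    ⟨n, forall_mem_range.2 fun j => dimM_le_of_isBounded (hf j)⟩
  have hS : {r | r ∈ R ∧ ∃ x : X, P x r ⊆ B'} ⊆
      ⋃ k, {r | r ∈ R ∧ ∃ x : X, P x r ⊆ accumulate f k} := by
    rintro r ⟨hr, x, hx⟩
    obtain ⟨k, hk⟩ := (hP x r hr).exists_subset_accumulate (hx.trans hcov)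
    exact mem_iUnion.2 ⟨k, hr, x, hk⟩
  calc c * dimP {r | r ∈ R ∧ ∃ x : X, P x r ⊆ B'}
      ≤ c * ⨆ k, dimM {r | r ∈ R ∧ ∃ x : X, P x r ⊆ accumulate f k} :=
        mul_le_mul_of_nonneg_left
          (dimP_le_iSup_dimM hS fun k => hR.subset fun r hr => hr.1) hc.le
    _ = ⨆ k, c * dimM {r | r ∈ R ∧ ∃ x : X, P x r ⊆ accumulate f k} :=
        Real.mul_iSup_of_nonneg hc.le _
    _ ≤ ⨆ j, dimM (f j) := ciSup_le fun k =>
        (hyp _ (isBounded_accumulate hf k)).trans (dimM_accumulate_le hf (le_ciSup hbdd) k)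

/-- Suppose each `P x r` (for `x ∈ X`, `r ∈ R`, with `R ⊆ ℝ^m` bounded) is a finite subset of
`ℝ^n`, and `S(B) = {r ∈ R : ∃ x, P x r ⊆ B}`. If `dim_M B ≥ c · dim_M S(B)` for every
bounded `B`, then `dim_P B' ≥ c · dim_P S(B')` for every set `B'`. -/
theorem stmt5 (n m : ℕ) (hn : 1 ≤ n) (hm : 1 ≤ m) (X : Type*)
    (R : Set (EuclideanSpace ℝ (Fin m))) (hR : IsBounded R)
    (P : X → EuclideanSpace ℝ (Fin m) → Set (EuclideanSpace ℝ (Fin n)))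
    (hP : ∀ x : X, ∀ r ∈ R, (P x r).Finite)
    (c : ℝ) (hc : 0 < c)
    (hyp : ∀ B : Set (EuclideanSpace ℝ (Fin n)), IsBounded B →
      c * dimM {r | r ∈ R ∧ ∃ x : X, P x r ⊆ B} ≤ dimM B) :
    ∀ B' : Set (EuclideanSpace ℝ (Fin n)),
      c * dimP {r | r ∈ R ∧ ∃ x : X, P x r ⊆ B'} ≤ dimP B' :=
  stmt5_general n m X R hR P hP c hc hyp
end

section
/- Let U ⊆ ℤ ∖ {0} be a finite set with |U| = k, let n ≥ 1 be an integer, let ε > 0, and let p be a prime such that |u| < p^ε for every u ∈ U. Then g_{n,U}(p) ≥ (2p^ε)^{-n} · G'_U(p^n). -/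
/-!
Read `v ∈ 𝔽_p^n` as the integer `x` with base-`p` digits `0 ≤ vᵢ < p`; this embeds `𝔽_p^n` into
`ℤ`. Take an optimal `A`, a basepoint `v` and its step `r ≠ 0`, and lift `r` to the integer `r'`
with the balanced digits `|rᵢ| ≤ p / 2` (nonzero, since all digits are smaller than `p` in
absolute value). Then `x + r' u` has the digits `vᵢ + rᵢ u`, which reduce to the point
`v + u r ∈ A` and, for `|u| ≤ M`, lie in a fixed window of `(M + 1) p` consecutive integers. So
every integer pattern lies in the set of numbers whose digit vector lifts a point of `A` into that
window, a set of size at most `|A| (M + 1)^n`; with `M = ⌊p^ε⌋` this is at most `|A| (2 p^ε)^n`.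
-/

/-- `G'U U M` : the minimum cardinality of a finite set `B ⊆ ℤ` containing a `U`-pattern
`{x + r·u : u ∈ U}` (with `r ≠ 0`) for `M` distinct integer basepoints `x`. -/
noncomputable def G'U (U : Finset ℤ) (M : ℕ) : ℕ :=
  sInf { m | ∃ B : Finset ℤ, B.card = m ∧ ∃ X : Finset ℤ, X.card = M ∧
    ∀ x ∈ X, ∃ r : ℤ, r ≠ 0 ∧ ∀ u ∈ U, x + r * u ∈ B }

/-- `gnU U n p` : the minimum cardinality of a set `A ⊆ 𝔽_p^n` containing a `U`-pattern
`{x + ū·r : u ∈ U}` (with `r ≠ 0`) with basepoint `x`, for every `x ∈ 𝔽_p^n`. -/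
noncomputable def gnU (U : Finset ℤ) (n p : ℕ) : ℕ :=
  sInf { m | ∃ A : Finset (Fin n → ZMod p), A.card = m ∧
    ∀ x : Fin n → ZMod p, ∃ r : Fin n → ZMod p, r ≠ 0 ∧
      ∀ u ∈ U, x + (u : ZMod p) • r ∈ A }

open Finset Matrix

theorem Int.card_filter_intCast_eq_Ico {p : ℕ} [NeZero p] (a : ℤ) (m : ℕ) (t : ZMod p) :
    #{d ∈ Ico a (a + m * p) | ((d : ℤ) : ZMod p) = t} = m := by
  have hp : (0 : ℤ) < p := by have := NeZero.pos p; omega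
  have hshift : (((a + m * p : ℤ) : ℚ) - t.valMinAbs) / ((p : ℤ) : ℚ)
      = ((a : ℚ) - t.valMinAbs) / ((p : ℤ) : ℚ) + m := by
    have : (p : ℚ) ≠ 0 := by exact_mod_cast hp.ne'
    push_cast
    field_simp
    ring
  have h := Int.Ico_filter_modEq_card a (a + m * p) hp t.valMinAbs
  simp only [← ZMod.intCast_eq_intCast_iff, ZMod.coe_valMinAbs, hshift, Int.ceil_add_natCast] at h
  omega

theorem ZMod.abs_valMinAbs_lt {p : ℕ} [NeZero p] (t : ZMod p) : |t.valMinAbs| < p := by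
  have := t.natAbs_valMinAbs_le
  have := NeZero.pos p
  rw [Int.abs_eq_natAbs]
  omega

section Digits

variable {p n : ℕ}

def ofDigitsFin (p : ℕ) (d : Fin n → ℤ) : ℤ :=
  d ⬝ᵥ fun i => (p : ℤ) ^ (i : ℕ)

theorem ofDigitsFin_succ (d : Fin (n + 1) → ℤ) :
    ofDigitsFin p d = d 0 + p * ofDigitsFin p (Fin.tail d) := by
  simp only [ofDigitsFin, dotProduct, Fin.sum_univ_succ, mul_sum, Fin.tail]
  simp [pow_succ, mul_comm, mul_left_comm]

theorem ofDigitsFin_add_mul (d e : Fin n → ℤ) (u : ℤ) :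
    ofDigitsFin p (fun i => d i + e i * u) = ofDigitsFin p d + ofDigitsFin p e * u := by
  simp only [ofDigitsFin, dotProduct, add_mul, sum_add_distrib, sum_mul]
  congr 1
  exact sum_congr rfl fun i _ => by ring

theorem eq_zero_of_ofDigitsFin_eq_zero :
    ∀ {n : ℕ} {d : Fin n → ℤ}, (∀ i, |d i| < p) → ofDigitsFin p d = 0 → d = 0
  | 0, _, _, _ => Subsingleton.elim _ _
  | n + 1, d, hd, h => by
    rw [ofDigitsFin_succ] at h
    have hp : (p : ℤ) ≠ 0 := by have := hd 0; have := abs_nonneg (d 0); omega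
    have h0 : d 0 = 0 := Int.eq_zero_of_abs_lt_dvd ⟨-ofDigitsFin p (Fin.tail d), by linarith⟩ (hd 0)
    have htail : Fin.tail d = 0 := eq_zero_of_ofDigitsFin_eq_zero (fun i => hd i.succ) <| by
      rw [h0, zero_add] at h
      exact (mul_eq_zero.1 h).resolve_left hp
    exact funext fun i => Fin.cases h0 (congrFun htail) i

theorem ofDigitsFin_val_injective [NeZero p] :
    Function.Injective fun v : Fin n → ZMod p => ofDigitsFin p fun i => ((v i).val : ℤ) := by
  intro v w h
  have hdiff := eq_zero_of_ofDigitsFin_eq_zero (p := p)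
    (d := fun i => ((v i).val : ℤ) - (w i).val) (fun i => by
      have := (v i).val_lt; have := (w i).val_lt; rw [abs_lt]; omega)
    (by simp only [ofDigitsFin] at h ⊢; rw [← sub_eq_zero, ← sub_dotProduct] at h; exact h)
  funext i
  have := congrFun hdiff i
  simp only [Pi.zero_apply, sub_eq_zero, Nat.cast_inj] at this
  exact ZMod.val_injective p this

theorem ofDigitsFin_valMinAbs_ne_zero [NeZero p] {r : Fin n → ZMod p} (hr : r ≠ 0) :
    ofDigitsFin p (fun i => (r i).valMinAbs) ≠ 0 := fun h =>
  hr <| funext fun i => (ZMod.valMinAbs_eq_zero _).1 <|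
    congrFun (eq_zero_of_ofDigitsFin_eq_zero (fun i => (r i).abs_valMinAbs_lt) h) i

end Digits

section Lifts

variable {p n : ℕ}

noncomputable def digitWindow (p M : ℕ) : Finset ℤ :=
  Ico (-((M * (p / 2) : ℕ) : ℤ)) (-((M * (p / 2) : ℕ) : ℤ) + ((M + 1 : ℕ) : ℤ) * p)

theorem val_add_valMinAbs_mul_mem_digitWindow [NeZero p] {M : ℕ} (s t : ZMod p) {u : ℤ}
    (hu : |u| ≤ M) : (s.val : ℤ) + t.valMinAbs * u ∈ digitWindow p M := by
  have hprod : |t.valMinAbs * u| ≤ (M * (p / 2) : ℕ) := by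
    rw [abs_mul, mul_comm, Nat.cast_mul]
    refine mul_le_mul hu ?_ (abs_nonneg _) (by positivity)
    rw [Int.abs_eq_natAbs]
    exact_mod_cast t.natAbs_valMinAbs_le
  have hhalf : 2 * (M * (p / 2)) ≤ M * p := by
    rw [mul_left_comm]; exact Nat.mul_le_mul_left M (Nat.mul_div_le p 2)
  have hs := s.val_lt
  rw [abs_le] at hprod
  rw [digitWindow, mem_Ico]
  push_cast at hprod hhalf ⊢
  constructor <;> nlinarith

noncomputable def intLifts (p M : ℕ) (a : Fin n → ZMod p) : Finset (Fin n → ℤ) :=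
  Fintype.piFinset fun i => {d ∈ digitWindow p M | ((d : ℤ) : ZMod p) = a i}

theorem card_intLifts [NeZero p] (M : ℕ) (a : Fin n → ZMod p) :
    #(intLifts p M a) = (M + 1) ^ n := by
  simp only [intLifts, Fintype.card_piFinset, digitWindow, Int.card_filter_intCast_eq_Ico,
    prod_const, card_univ, Fintype.card_fin]

noncomputable def liftSet (p M : ℕ) (A : Finset (Fin n → ZMod p)) : Finset ℤ :=
  A.biUnion fun a => (intLifts p M a).image (ofDigitsFin p)

theorem card_liftSet_le [NeZero p] (M : ℕ) (A : Finset (Fin n → ZMod p)) :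
    #(liftSet p M A) ≤ #A * (M + 1) ^ n :=
  card_biUnion_le_card_mul _ _ _ fun a _ => card_image_le.trans (card_intLifts M a).le

theorem add_mul_mem_liftSet [NeZero p] {U : Finset ℤ} {M : ℕ} (hM : ∀ u ∈ U, |u| ≤ M)
    {A : Finset (Fin n → ZMod p)} {v r : Fin n → ZMod p}
    (hA : ∀ u ∈ U, v + (u : ZMod p) • r ∈ A) (u : ℤ) (hu : u ∈ U) :
    ofDigitsFin p (fun i => ((v i).val : ℤ)) + ofDigitsFin p (fun i => (r i).valMinAbs) * u
      ∈ liftSet p M A := by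
  refine mem_biUnion.2 ⟨_, hA u hu, mem_image.2 ⟨_, ?_, ofDigitsFin_add_mul _ _ u⟩⟩
  refine Fintype.mem_piFinset.2 fun i => mem_filter.2
    ⟨val_add_valMinAbs_mul_mem_digitWindow (v i) (r i) (hM u hu), ?_⟩
  simp [mul_comm]

end Lifts

theorem G'U_le_card_mul {p n : ℕ} [NeZero p] {U : Finset ℤ} {M : ℕ} (hM : ∀ u ∈ U, |u| ≤ M)
    {A : Finset (Fin n → ZMod p)}
    (hA : ∀ x, ∃ r : Fin n → ZMod p, r ≠ 0 ∧ ∀ u ∈ U, x + (u : ZMod p) • r ∈ A) :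
    G'U U (p ^ n) ≤ #A * (M + 1) ^ n := by
  refine le_trans (Nat.sInf_le ?_) (card_liftSet_le M A)
  refine ⟨liftSet p M A, rfl,
    univ.image fun v : Fin n → ZMod p => ofDigitsFin p fun i => ((v i).val : ℤ), ?_, ?_⟩
  · rw [card_image_of_injective _ ofDigitsFin_val_injective]
    simp
  · simp only [mem_image, mem_univ, true_and]
    rintro _ ⟨v, rfl⟩
    obtain ⟨r, hr, hvr⟩ := hA v
    exact ⟨_, ofDigitsFin_valMinAbs_ne_zero hr, add_mul_mem_liftSet hM hvr⟩

theorem G'U_le_gnU_mul {p n : ℕ} [Fact (1 < p)] (hn : n ≠ 0) {U : Finset ℤ} {M : ℕ}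
    (hM : ∀ u ∈ U, |u| ≤ M) : G'U U (p ^ n) ≤ gnU U n p * (M + 1) ^ n := by
  have : NeZero n := ⟨hn⟩
  obtain ⟨A, hAcard, hA⟩ : gnU U n p ∈ _ :=
    Nat.sInf_mem ⟨_, univ, rfl, fun _ => ⟨1, one_ne_zero, fun _ _ => mem_univ _⟩⟩
  rw [← hAcard]
  exact G'U_le_card_mul hM hA

theorem stmt18_general (p : ℕ) (hp : p.Prime) (U : Finset ℤ) (n : ℕ) (hn : 1 ≤ n) (ε : ℝ) (hε : 0 < ε)
    (hU : ∀ u ∈ U, (|u| : ℝ) < (p : ℝ) ^ ε) :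
    ((2 * (p : ℝ) ^ ε) ^ n)⁻¹ * (G'U U (p ^ n) : ℝ) ≤ (gnU U n p : ℝ) := by
  have : Fact (1 < p) := ⟨hp.one_lt⟩
  set M := ⌊(p : ℝ) ^ ε⌋₊
  have hM : ∀ u ∈ U, |u| ≤ (M : ℤ) := fun u hu => by
    rw [Int.abs_eq_natAbs, Nat.cast_le]
    exact Nat.le_floor (by simpa [Nat.cast_natAbs] using (hU u hu).le)
  have hM2 : (M : ℝ) + 1 ≤ 2 * (p : ℝ) ^ ε := by
    have := Nat.floor_le (Real.rpow_nonneg (Nat.cast_nonneg p) ε)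
    have := Real.one_le_rpow (by exact_mod_cast hp.one_lt.le : (1 : ℝ) ≤ p) hε.le
    linarith
  have hpε : 0 < (p : ℝ) ^ ε := Real.rpow_pos_of_pos (by exact_mod_cast hp.pos) ε
  rw [inv_mul_le_iff₀ (by positivity)]
  calc (G'U U (p ^ n) : ℝ) ≤ gnU U n p * ((M : ℝ) + 1) ^ n := by
        exact_mod_cast G'U_le_gnU_mul (by omega) hM
    _ ≤ gnU U n p * (2 * (p : ℝ) ^ ε) ^ n := by gcongr
    _ = _ := mul_comm _ _

/-- Let `U ⊆ ℤ ∖ {0}` with `|U| = k`, let `n ≥ 1`, `ε > 0`, and let `p` be a prime with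
`|u| < p^ε` for all `u ∈ U`. Then `g_{n,U}(p) ≥ (2p^ε)^{-n} · G'_U(p^n)`. -/
theorem stmt18 (p : ℕ) (hp : p.Prime) (U : Finset ℤ) (k : ℕ) (hcard : U.card = k)
    (h0 : (0 : ℤ) ∉ U) (n : ℕ) (hn : 1 ≤ n) (ε : ℝ) (hε : 0 < ε)
    (hU : ∀ u ∈ U, (|u| : ℝ) < (p : ℝ) ^ ε) :
    ((2 * (p : ℝ) ^ ε) ^ n)⁻¹ * (G'U U (p ^ n) : ℝ) ≤ (gnU U n p : ℝ) :=
  stmt18_general p hp U n hn ε hε hU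
end

section
/- Let B ⊆ ℤ × ℤ be a finite nonempty set, let S ⊆ ℕ be a finite nonempty set, and let ε > 0. Suppose that |π_{-1}(B)| > max_{j ∈ S} |π_j(B)|^{1+ε}. Then for every M > 0 there exists a finite nonempty set B' ⊆ ℤ × ℤ such that |π_{-1}(B')| > M · max_{j ∈ S} |π_j(B')|^{1+ε}. -/
/-!
Tensor-power trick. For `T` larger than the diameter of `π_{-1}(B)`, the set `B + T • B` has
`π_j(B + T • B) = π_j(B) + T • π_j(B)`, so every projection has size at most `|π_j(B)|²`, while
for `j = -1` the sum is direct and the size is exactly `|π_{-1}(B)|²`. Iterating `n` times raises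
all sizes to the power `2ⁿ`, and the ratio `|π_{-1}(B)| / |π_j(B)|^{1+ε} > 1` to the power `2ⁿ`,
which eventually exceeds `M`.
-/

open Finset Filter
open scoped Pointwise

/-- The projection `π_j(A) = {x + j·y : (x,y) ∈ A}` of a finite set `A ⊆ ℤ × ℤ`. -/
def proj (j : ℤ) (A : Finset (ℤ × ℤ)) : Finset ℤ :=
  A.image fun q => q.1 + j * q.2

def projHom (j : ℤ) : ℤ × ℤ →+ ℤ :=
  AddMonoidHom.mk' (fun q => q.1 + j * q.2) fun p q => by simp only [Prod.fst_add, Prod.snd_add]; ring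

lemma proj_add_image_smul (j T : ℤ) (B C : Finset (ℤ × ℤ)) :
    proj j (B + C.image (T • ·)) = proj j B + (proj j C).image (T • ·) := by
  change (B + C.image (T • ·)).image (projHom j) = B.image (projHom j) + _
  rw [image_add, image_image, proj, image_image]
  congr 2
  exact funext fun q => map_zsmul (projHom j) T q

lemma card_add_image_smul_of_abs_sub_lt {A A' : Finset ℤ} {T : ℤ}
    (hT : ∀ a ∈ A, ∀ b ∈ A, |a - b| < T) : #(A + A'.image (T • ·)) = #A * #A' := by
  obtain rfl | ⟨a₀, ha₀⟩ := A.eq_empty_or_nonempty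
  · simp
  have hT₀ : T ≠ 0 := by have := hT a₀ ha₀ a₀ ha₀; rw [sub_self, abs_zero] at this; omega
  rw [← card_image_of_injective A' (smul_right_injective ℤ hT₀), card_add_iff]
  rintro ⟨a, c⟩ ⟨ha, hc⟩ ⟨a', c'⟩ ⟨ha', hc'⟩ (h : a + c = a' + c')
  obtain ⟨b, -, rfl⟩ := mem_image.1 hc
  obtain ⟨b', -, rfl⟩ := mem_image.1 hc'
  have hdvd : T ∣ a - a' := ⟨b' - b, by simp only [smul_eq_mul] at h; linarith⟩
  obtain rfl : a = a' := sub_eq_zero.1 (Int.eq_zero_of_abs_lt_dvd hdvd (hT a ha a' ha'))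
  simpa using h

lemma exists_abs_sub_lt (A : Finset ℤ) : ∃ T : ℤ, ∀ a ∈ A, ∀ b ∈ A, |a - b| < T := by
  obtain ⟨K, hK⟩ := ((A ×ˢ A).image fun p : ℤ × ℤ => |p.1 - p.2|).exists_le
  refine ⟨K + 1, fun a ha b hb => ?_⟩
  have := hK |a - b| (mem_image.2 ⟨(a, b), mem_product.2 ⟨ha, hb⟩, rfl⟩)
  omega

lemma exists_card_proj_sq (i : ℤ) {B : Finset (ℤ × ℤ)} (hB : B.Nonempty) :
    ∃ B' : Finset (ℤ × ℤ), B'.Nonempty ∧ #(proj i B') = #(proj i B) ^ 2 ∧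
      ∀ j, #(proj j B') ≤ #(proj j B) ^ 2 := by
  obtain ⟨T, hT⟩ := exists_abs_sub_lt (proj i B)
  refine ⟨B + B.image (T • ·), hB.add (hB.image _), ?_, fun j => ?_⟩
  · rw [proj_add_image_smul, card_add_image_smul_of_abs_sub_lt hT, sq]
  · rw [proj_add_image_smul, sq]
    exact card_add_le.trans (Nat.mul_le_mul_left _ card_image_le)

lemma exists_card_proj_pow_two_pow (i : ℤ) {B : Finset (ℤ × ℤ)} (hB : B.Nonempty) (n : ℕ) :
    ∃ B' : Finset (ℤ × ℤ), B'.Nonempty ∧ #(proj i B') = #(proj i B) ^ 2 ^ n ∧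
      ∀ j, #(proj j B') ≤ #(proj j B) ^ 2 ^ n := by
  induction n with
  | zero => exact ⟨B, hB, by simp, fun j => by simp⟩
  | succ n ih =>
    obtain ⟨C, hC, hCi, hCj⟩ := ih
    obtain ⟨D, hD, hDi, hDj⟩ := exists_card_proj_sq i hC
    refine ⟨D, hD, by rw [hDi, hCi, ← pow_mul, ← pow_succ], fun j => ?_⟩
    calc #(proj j D) ≤ #(proj j C) ^ 2 := hDj j
      _ ≤ (#(proj j B) ^ 2 ^ n) ^ 2 := Nat.pow_le_pow_left (hCj j) 2
      _ = #(proj j B) ^ 2 ^ (n + 1) := by rw [← pow_mul, ← pow_succ]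

lemma eventually_mul_pow_lt_pow {x y : ℝ} (hx : 0 ≤ x) (hxy : x < y) (M : ℝ) :
    ∀ᶠ n : ℕ in atTop, M * x ^ n < y ^ n := by
  have hy : 0 < y := hx.trans_lt hxy
  have hlim : Tendsto (fun n : ℕ => M * (x / y) ^ n) atTop (nhds (M * 0)) :=
    (tendsto_pow_atTop_nhds_zero_of_lt_one (div_nonneg hx hy.le)
      ((div_lt_one hy).2 hxy)).const_mul M
  filter_upwards [hlim.eventually_lt_const (by simp : M * 0 < 1)] with n hn
  rwa [div_pow, ← mul_div_assoc, div_lt_one (pow_pos hy n)] at hn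

theorem stmt19_general (B : Finset (ℤ × ℤ)) (hBne : B.Nonempty)
    (S : Finset ℕ) (ε : ℝ) (hε : 0 < ε)
    (hB : ∀ j ∈ S, ((proj (j : ℤ) B).card : ℝ) ^ (1 + ε) < (proj (-1) B).card) :
    ∀ M : ℝ, 0 < M → ∃ B' : Finset (ℤ × ℤ), B'.Nonempty ∧
      ∀ j ∈ S, M * ((proj (j : ℤ) B').card : ℝ) ^ (1 + ε) < (proj (-1) B').card := by
  intro M hM
  have hev : ∀ᶠ n : ℕ in atTop, ∀ j ∈ S,
      M * ((#(proj j B) : ℝ) ^ (1 + ε)) ^ 2 ^ n < (#(proj (-1) B) : ℝ) ^ 2 ^ n :=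
    (eventually_all_finset S).2 fun j hj =>
      (tendsto_pow_atTop_atTop_of_one_lt one_lt_two).eventually
        (eventually_mul_pow_lt_pow (by positivity) (hB j hj) M)
  obtain ⟨n, hn⟩ := hev.exists
  obtain ⟨B', hB'ne, hB'i, hB'j⟩ := exists_card_proj_pow_two_pow (-1) hBne n
  refine ⟨B', hB'ne, fun j hj => ?_⟩
  calc M * (#(proj j B') : ℝ) ^ (1 + ε)
      ≤ M * ((#(proj j B) : ℝ) ^ 2 ^ n) ^ (1 + ε) := by
        gcongr
        exact_mod_cast hB'j j
    _ = M * ((#(proj j B) : ℝ) ^ (1 + ε)) ^ 2 ^ n := by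
        rw [Real.rpow_pow_comm (Nat.cast_nonneg _)]
    _ < (#(proj (-1) B') : ℝ) := by
        rw [hB'i, Nat.cast_pow]
        exact hn j hj

/-- Amplification lemma: if `B ⊆ ℤ × ℤ` is finite and nonempty, `S ⊆ ℕ` is finite and nonempty,
`ε > 0`, and `|π_{-1}(B)| > |π_j(B)|^{1+ε}` for every `j ∈ S` (i.e. `|π_{-1}(B)|` exceeds the
max over `S`), then for every `M > 0` there is a finite nonempty `B' ⊆ ℤ × ℤ` with
`|π_{-1}(B')| > M · |π_j(B')|^{1+ε}` for every `j ∈ S`. -/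
theorem stmt19 (B : Finset (ℤ × ℤ)) (hBne : B.Nonempty)
    (S : Finset ℕ) (hSne : S.Nonempty) (ε : ℝ) (hε : 0 < ε)
    (hB : ∀ j ∈ S, ((proj (j : ℤ) B).card : ℝ) ^ (1 + ε) < (proj (-1) B).card) :
    ∀ M : ℝ, 0 < M → ∃ B' : Finset (ℤ × ℤ), B'.Nonempty ∧
      ∀ j ∈ S, M * ((proj (j : ℤ) B').card : ℝ) ^ (1 + ε) < (proj (-1) B').card :=
  stmt19_general B hBne S ε hε hB
end
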